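/- (Part of Theorem 6.1.) Let (D1, M) be a consistent periodic first-derivative SBP operator with diagonal mass matrix (M symmetric positive definite and diagonal, M·D1 + D1ᵀ·M = 0, D1·𝟙 = 0). Let ρ ∈ ℝ^m have strictly positive components and K ∈ ℝ^m have strictly positive components; define the pointwise stress σ(ε)ᵢ = exp(Kᵢ·εᵢ) − 1 for ε ∈ ℝ^m. Let ε, u : ℝ → ℝ^m be differentiable and satisfy the semidiscretized p-system ∂ₜε = D1·u, ∂ₜuᵢ = ρᵢ⁻¹·(D1·σ(ε))ᵢ for all t and all i. Then the discrete total mass of ε, namely 𝟙ᵀ·M·ε(t), is constant in t. -/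

import Mathlib

/-!
The SBP property gives `M D1 = -D1ᵀ M`, so `d/dt 𝟙ᵀ M ε = 𝟙ᵀ M D1 u = -(D1 𝟙)ᵀ M u`, which vanishes
by consistency.
-/

open Matrix

theorem Matrix.dotProduct_mulVec_mulVec_eq_zero_of_mulVec_eq_zero {R ι : Type*} [CommRing R]
    [Fintype ι] {D M : Matrix ι ι R} (hSBP : M * D + Dᵀ * M = 0) {a : ι → R}
    (ha : D *ᵥ a = 0) (w : ι → R) :
    a ⬝ᵥ (M *ᵥ (D *ᵥ w)) = 0 := by
  have hMD : M * D = -(Dᵀ * M) := eq_neg_of_add_eq_zero_left hSBP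
  calc a ⬝ᵥ (M *ᵥ (D *ᵥ w))
      = -(a ⬝ᵥ (Dᵀ *ᵥ (M *ᵥ w))) := by
        rw [mulVec_mulVec, hMD, neg_mulVec, dotProduct_neg, mulVec_mulVec]
    _ = -((D *ᵥ a) ⬝ᵥ (M *ᵥ w)) := by rw [dotProduct_mulVec, vecMul_transpose]
    _ = 0 := by rw [ha, zero_dotProduct, neg_zero]

theorem HasDerivAt.dotProduct_mulVec {𝕜 ι κ : Type*} [NontriviallyNormedField 𝕜] [Fintype ι]
    [Fintype κ] {f : 𝕜 → ι → 𝕜} {f' : ι → 𝕜} {t : 𝕜} (hf : HasDerivAt f f' t)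
    (a : κ → 𝕜) (M : Matrix κ ι 𝕜) :
    HasDerivAt (fun s => a ⬝ᵥ (M *ᵥ f s)) (a ⬝ᵥ (M *ᵥ f')) t := by
  simp_rw [Matrix.dotProduct_mulVec a M, dotProduct]
  exact HasDerivAt.fun_sum fun j _ => (hasDerivAt_pi.1 hf j).const_mul _

theorem p_system_conserves_total_mass_of_strain_general
    (m : ℕ) (D1 M : Matrix (Fin m) (Fin m) ℝ)
    (hD1 : M * D1 + D1ᵀ * M = 0)
    (hD1cons : D1 *ᵥ (1 : Fin m → ℝ) = 0)
    (ε u : ℝ → Fin m → ℝ)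
    (hε : ∀ t, HasDerivAt ε (D1 *ᵥ u t) t) :
    ∀ t₁ t₂ : ℝ,
      (1 : Fin m → ℝ) ⬝ᵥ (M *ᵥ ε t₁) = (1 : Fin m → ℝ) ⬝ᵥ (M *ᵥ ε t₂) := by
  have hmass : ∀ t, HasDerivAt (fun s => (1 : Fin m → ℝ) ⬝ᵥ (M *ᵥ ε s)) 0 t := fun t => by
    simpa only [dotProduct_mulVec_mulVec_eq_zero_of_mulVec_eq_zero hD1 hD1cons] using
      (hε t).dotProduct_mulVec 1 M
  exact is_const_of_deriv_eq_zero (fun t => (hmass t).differentiableAt) (fun t => (hmass t).deriv)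

/-- For the semidiscretized variable-coefficient p-system
`∂ₜε = D1 u`, `∂ₜuᵢ = ρᵢ⁻¹ (D1 σ(ε))ᵢ` with `σ(ε)ᵢ = exp(Kᵢ εᵢ) − 1`
and `(D1, M)` a consistent periodic first-derivative SBP operator with
diagonal mass matrix, the discrete total mass `𝟙ᵀ·M·ε(t)` is constant. -/
theorem p_system_conserves_total_mass_of_strain
    (m : ℕ) (D1 M : Matrix (Fin m) (Fin m) ℝ)
    (hM : M.PosDef) (hMdiag : M.IsDiag)
    (hD1 : M * D1 + D1ᵀ * M = 0)
    (hD1cons : D1 *ᵥ (1 : Fin m → ℝ) = 0)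
    (ρ K : Fin m → ℝ)
    (hρ : ∀ i, 0 < ρ i) (hK : ∀ i, 0 < K i)
    (ε u : ℝ → Fin m → ℝ)
    (hε : ∀ t, HasDerivAt ε (D1 *ᵥ u t) t)
    (hu : ∀ t, HasDerivAt u
      (fun i => (ρ i)⁻¹ * (D1 *ᵥ (fun j => Real.exp (K j * ε t j) - 1)) i) t) :
    ∀ t₁ t₂ : ℝ,
      (1 : Fin m → ℝ) ⬝ᵥ (M *ᵥ ε t₁) = (1 : Fin m → ℝ) ⬝ᵥ (M *ᵥ ε t₂) :=
  p_system_conserves_total_mass_of_strain_general m D1 M hD1 hD1cons ε u hε
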